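/- For every positive integer n, the quantities F_n := -Σ_{t=1}^∞ R_n'(t) satisfy the Apéry recurrence (n+1)^3 F_{n+1} - (2n+1)(17n^2+17n+5) F_n + n^3 F_{n-1} = 0. -/

import Mathlib

open Finset Filter

noncomputable def R (n : ℕ) (t : ℝ) : ℝ :=
  ((∏ j ∈ Finset.Icc 1 n, (t - j)) / (∏ j ∈ Finset.range (n + 1), (t + j))) ^ 2

noncomputable def F (n : ℕ) : ℝ := -∑' t : ℕ, deriv (R n) (t + 1)

/-- `Rh n x = ∏_{j=1}^n (x-j)/(x+j)`. -/
noncomputable def Rh (n : ℕ) (x : ℝ) : ℝ := ∏ j ∈ Finset.Icc 1 n, ((x - j) / (x + j))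

/-- derivative of `Rh`. -/
noncomputable def Rh' (n : ℕ) (x : ℝ) : ℝ :=
  ∑ j ∈ Finset.Icc 1 n,
    (∏ k ∈ (Finset.Icc 1 n).erase j, ((x - k) / (x + k))) * (2 * j / (x + j) ^ 2)

/-- explicit derivative of `R`. -/
noncomputable def D (n : ℕ) (x : ℝ) : ℝ :=
  2 * (Rh n x / x) * ((Rh' n x * x - Rh n x) / x ^ 2)

noncomputable def Sf (n : ℕ) (x : ℝ) : ℝ :=
  4 * (2 * n + 1) * (-2 * x ^ 2 + x + (2 * n + 1) ^ 2) * R n x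

noncomputable def SD (n : ℕ) (x : ℝ) : ℝ :=
  4 * (2 * n + 1) * (-4 * x + 1) * R n x
    + 4 * (2 * n + 1) * (-2 * x ^ 2 + x + (2 * n + 1) ^ 2) * D n x

lemma prodIcc_shift (f : ℕ → ℝ) (n : ℕ) :
    ∏ j ∈ Finset.Icc 1 n, f j = ∏ i ∈ Finset.range n, f (i + 1) := by
  rw [← Finset.Ico_add_one_right_eq_Icc, Finset.prod_Ico_eq_prod_range]
  simp [add_comm]

lemma prodQ_pos (n : ℕ) {x : ℝ} (hx : 0 < x) :
    0 < ∏ j ∈ Finset.range (n + 1), (x + (j : ℝ)) := by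
  apply Finset.prod_pos
  intro j _
  positivity

lemma prodIcc_plus_pos (n : ℕ) {x : ℝ} (hx : 0 < x) :
    0 < ∏ j ∈ Finset.Icc 1 n, (x + (j : ℝ)) := by
  apply Finset.prod_pos; intro j _; positivity

lemma R_eq (n : ℕ) {x : ℝ} (hx : 0 < x) : R n x = (Rh n x / x) ^ 2 := by
  have hq : (0:ℝ) < ∏ j ∈ Finset.Icc 1 n, (x + (j : ℝ)) := prodIcc_plus_pos n hx
  have hsplit : ∏ j ∈ Finset.range (n + 1), (x + (j : ℝ))
      = x * ∏ j ∈ Finset.Icc 1 n, (x + (j : ℝ)) := by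
    rw [Finset.prod_range_succ' (fun j => x + (j : ℝ)) n, prodIcc_shift (fun j => x + (j : ℝ)) n]
    push_cast
    ring
  rw [R, Rh, hsplit, Finset.prod_div_distrib]
  rw [div_div]
  ring_nf

lemma hasDerivAt_Rh (n : ℕ) {x : ℝ} (hx : 0 < x) : HasDerivAt (Rh n) (Rh' n x) x := by
  have h : ∀ j ∈ Finset.Icc 1 n,
      HasDerivAt (fun y : ℝ => (y - j) / (y + j)) (2 * j / (x + j) ^ 2) x := by
    intro j _
    have hd : HasDerivAt (fun y : ℝ => y + (j:ℝ)) 1 x := (hasDerivAt_id x).add_const _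
    have hc : HasDerivAt (fun y : ℝ => y - (j:ℝ)) 1 x := (hasDerivAt_id x).sub_const _
    have hne : x + (j:ℝ) ≠ 0 := by positivity
    have := hc.div hd hne
    refine this.congr_deriv ?_
    field_simp
    ring
  have := HasDerivAt.finset_prod h
  simp only [smul_eq_mul] at this
  exact this.congr_deriv rfl |>.congr_of_eventuallyEq (by
    filter_upwards with y
    simp only [Rh, Finset.prod_apply])

lemma hasDerivAt_R (n : ℕ) {x : ℝ} (hx : 0 < x) : HasDerivAt (R n) (D n x) x := by
  have h1 : HasDerivAt (fun y => Rh n y / y) ((Rh' n x * x - Rh n x * 1) / x ^ 2) x :=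
    (hasDerivAt_Rh n hx).div (hasDerivAt_id x) hx.ne'
  have h2 : HasDerivAt (fun y => (Rh n y / y) ^ 2)
      (2 * (Rh n x / x) ^ 1 * ((Rh' n x * x - Rh n x * 1) / x ^ 2)) x := by
    simpa using h1.fun_pow 2
  have heq : R n =ᶠ[nhds x] fun y => (Rh n y / y) ^ 2 := by
    filter_upwards [IsOpen.eventually_mem isOpen_Ioi (Set.mem_Ioi.mpr hx)] with y hy
    exact R_eq n (Set.mem_Ioi.mp hy)
  have h3 : HasDerivAt (R n) (2 * (Rh n x / x) ^ 1 * ((Rh' n x * x - Rh n x * 1) / x ^ 2)) x :=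
    h2.congr_of_eventuallyEq heq
  convert h3 using 1
  rw [D]; ring

lemma deriv_R (n : ℕ) {x : ℝ} (hx : 0 < x) : deriv (R n) x = D n x :=
  (hasDerivAt_R n hx).deriv

lemma hasDerivAt_Sf (n : ℕ) {x : ℝ} (hx : 0 < x) : HasDerivAt (Sf n) (SD n x) x := by
  have hp : HasDerivAt (fun y : ℝ => 4 * (n:ℝ) * 2 + 4) 0 x := hasDerivAt_const _ _
  have hpoly : HasDerivAt (fun y : ℝ => 4 * (2 * (n:ℝ) + 1) * (-2 * y ^ 2 + y + (2 * n + 1) ^ 2))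
      (4 * (2 * (n:ℝ) + 1) * (-4 * x + 1)) x := by
    have h1 : HasDerivAt (fun y : ℝ => -2 * y ^ 2 + y + (2 * (n:ℝ) + 1) ^ 2)
        (-2 * (2 * x ^ 1) + 1) x := (((hasDerivAt_pow 2 x).const_mul (-2)).add
          (hasDerivAt_id x)).add_const _
    have := h1.const_mul (4 * (2 * (n:ℝ) + 1))
    refine this.congr_deriv ?_
    ring
  have := hpoly.mul (hasDerivAt_R n hx)
  have h2 : HasDerivAt (Sf n)
      (4 * (2 * (n:ℝ) + 1) * (-4 * x + 1) * R n x
        + 4 * (2 * (n:ℝ) + 1) * (-2 * x ^ 2 + x + (2 * (n:ℝ) + 1) ^ 2) * D n x) x := by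
    have heq : Sf n = fun y => (4 * (2 * (n:ℝ) + 1) * (-2 * y ^ 2 + y + (2 * n + 1) ^ 2)) * R n y := by
      funext y; rw [Sf]
    rw [heq]
    exact this
  exact h2

/-- The key telescoping identity. -/
lemma key_identity (m : ℕ) {x : ℝ} (hx : 0 < x) :
    ((m:ℝ) + 2) ^ 3 * R (m + 2) x
      - (2 * ((m:ℝ)+1) + 1) * (17 * ((m:ℝ)+1) ^ 2 + 17 * ((m:ℝ)+1) + 5) * R (m + 1) x
      + ((m:ℝ) + 1) ^ 3 * R m x
      = Sf (m + 1) (x + 1) - Sf (m + 1) x := by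
  have hx1 : (0:ℝ) < x + 1 := by linarith
  set p : ℝ := ∏ i ∈ Finset.range m, (x - ((i:ℝ) + 1)) with hp
  set q : ℝ := ∏ i ∈ Finset.range (m + 1), (x + (i:ℝ)) with hq
  have hq0 : q ≠ 0 := (prodQ_pos m hx).ne'
  have hxm1 : x + ((m:ℝ) + 1) ≠ 0 := by positivity
  have hxm2 : x + ((m:ℝ) + 2) ≠ 0 := by positivity
  -- numerators at x
  have hPm : (∏ j ∈ Finset.Icc 1 m, (x - (j:ℝ))) = p := by
    rw [prodIcc_shift (fun j => x - (j:ℝ)) m, hp]; push_cast; rfl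
  have hPm1 : (∏ j ∈ Finset.Icc 1 (m+1), (x - (j:ℝ))) = p * (x - ((m:ℝ)+1)) := by
    rw [Finset.prod_Icc_succ_top (by omega), hPm]; push_cast; ring
  have hPm2 : (∏ j ∈ Finset.Icc 1 (m+2), (x - (j:ℝ))) = p * (x - ((m:ℝ)+1)) * (x - ((m:ℝ)+2)) := by
    rw [show m + 2 = (m+1) + 1 from rfl, Finset.prod_Icc_succ_top (by omega), hPm1]
    push_cast; ring
  -- denominators at x
  have hQm1 : (∏ j ∈ Finset.range (m+1+1), (x + (j:ℝ))) = q * (x + ((m:ℝ)+1)) := by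
    rw [Finset.prod_range_succ, hq]; push_cast; ring
  have hQm2 : (∏ j ∈ Finset.range (m+2+1), (x + (j:ℝ))) = q * (x + ((m:ℝ)+1)) * (x + ((m:ℝ)+2)) := by
    rw [Finset.prod_range_succ, hQm1]; push_cast; ring
  -- shifted numerator
  have hPs : (∏ j ∈ Finset.Icc 1 (m+1), (x + 1 - (j:ℝ))) = x * p := by
    rw [prodIcc_shift (fun j => x + 1 - (j:ℝ)) (m+1)]
    have hcg : ∀ i ∈ Finset.range (m+1), x + 1 - ((i+1 : ℕ):ℝ) = x - (i:ℝ) := by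
      intro i _; push_cast; ring
    rw [Finset.prod_congr rfl hcg, Finset.prod_range_succ' (fun i => x - (i:ℝ)) m]
    simp only [Nat.cast_zero, sub_zero]
    rw [mul_comm, hp]
    congr 1
    apply Finset.prod_congr rfl
    intro i _; push_cast; ring
  -- shifted denominator
  have hQs : (∏ j ∈ Finset.range (m+1+1), (x + 1 + (j:ℝ)))
      = q * (x + ((m:ℝ)+1)) * (x + ((m:ℝ)+2)) / x := by
    rw [eq_div_iff hx.ne']
    have h1 : (∏ j ∈ Finset.range (m+2+1), (x + (j:ℝ)))
        = (∏ i ∈ Finset.range (m+2), (x + ((i:ℝ)+1))) * x := by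
      rw [Finset.prod_range_succ' (fun j => x + (j:ℝ)) (m+2)]
      simp only [Nat.cast_zero, add_zero, Nat.cast_add, Nat.cast_one]
    have h2 : (∏ j ∈ Finset.range (m+1+1), (x + 1 + (j:ℝ)))
        = ∏ i ∈ Finset.range (m+2), (x + ((i:ℝ)+1)) := by
      apply Finset.prod_congr rfl
      intro i _; ring
    rw [h2, ← hQm2, h1]
  simp only [R, Sf, hPm, hPm1, hPm2, hQm1, hQm2, hPs, hQs]
  push_cast
  field_simp
  ring

lemma abs_ratio_le {x : ℝ} (hx : 0 < x) (j : ℕ) : |(x - (j:ℝ)) / (x + j)| ≤ 1 := by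
  have hj : (0:ℝ) ≤ j := Nat.cast_nonneg j
  rw [abs_div, abs_of_pos (show (0:ℝ) < x + j by linarith),
    div_le_one (show (0:ℝ) < x + j by linarith), abs_le]
  constructor <;> linarith

lemma abs_prod_ratio_le (s : Finset ℕ) {x : ℝ} (hx : 0 < x) :
    |∏ k ∈ s, ((x - (k:ℝ)) / (x + k))| ≤ 1 := by
  rw [Finset.abs_prod]
  apply Finset.prod_le_one
  · intro k _; exact abs_nonneg _
  · intro k _; exact abs_ratio_le hx k

lemma abs_Rh_le (n : ℕ) {x : ℝ} (hx : 0 < x) : |Rh n x| ≤ 1 := abs_prod_ratio_le _ hx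

lemma abs_Rh'_le (n : ℕ) {x : ℝ} (hx : 0 < x) : |Rh' n x| ≤ 2 * n ^ 2 / x ^ 2 := by
  have hn0 : (0:ℝ) ≤ n := Nat.cast_nonneg n
  calc |Rh' n x|
      ≤ ∑ j ∈ Finset.Icc 1 n,
          |(∏ k ∈ (Finset.Icc 1 n).erase j, ((x - (k:ℝ)) / (x + k))) * (2 * j / (x + j) ^ 2)| :=
        Finset.abs_sum_le_sum_abs _ _
    _ ≤ ∑ _j ∈ Finset.Icc 1 n, (2 * (n:ℝ) / x ^ 2) := by
        apply Finset.sum_le_sum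
        intro j hj
        have hjn : (j:ℝ) ≤ n := by exact_mod_cast (Finset.mem_Icc.mp hj).2
        have hjpos : (0:ℝ) ≤ j := Nat.cast_nonneg j
        rw [abs_mul]
        have h1 := abs_prod_ratio_le ((Finset.Icc 1 n).erase j) hx
        have h2 : |2 * (j:ℝ) / (x + j) ^ 2| ≤ 2 * n / x ^ 2 := by
          rw [abs_of_nonneg (by positivity)]
          apply div_le_div₀ (by positivity) (by linarith) (by positivity)
          nlinarith
        calc |∏ k ∈ (Finset.Icc 1 n).erase j, ((x - (k:ℝ)) / (x + k))| * |2 * (j:ℝ) / (x + j) ^ 2|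
            ≤ 1 * (2 * n / x ^ 2) := by
              apply mul_le_mul h1 h2 (abs_nonneg _) (by norm_num)
          _ = 2 * n / x ^ 2 := one_mul _
    _ = n * (2 * (n:ℝ) / x ^ 2) := by
        rw [Finset.sum_const, Nat.card_Icc]
        simp
    _ = 2 * n ^ 2 / x ^ 2 := by ring

lemma abs_R_le (n : ℕ) {x : ℝ} (hx : 0 < x) : |R n x| ≤ 1 / x ^ 2 := by
  have h1 : |Rh n x / x| ≤ 1 / x := by
    rw [abs_div, abs_of_pos hx]
    exact div_le_div₀ (by norm_num) (abs_Rh_le n hx) hx le_rfl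
  calc |R n x| = |Rh n x / x| ^ 2 := by
        rw [R_eq n hx, abs_of_nonneg (sq_nonneg _), ← sq_abs]
    _ ≤ (1 / x) ^ 2 := by
        apply pow_le_pow_left₀ (abs_nonneg _) h1
    _ = 1 / x ^ 2 := by rw [div_pow, one_pow]

lemma abs_D_le (n : ℕ) {x : ℝ} (hx : 1 ≤ x) : |D n x| ≤ (4 * n ^ 2 + 2) / x ^ 3 := by
  have hx0 : (0:ℝ) < x := lt_of_lt_of_le one_pos hx
  have hRh := abs_Rh_le n hx0
  have hRh' := abs_Rh'_le n hx0
  have hRhx : |Rh n x / x| ≤ 1 / x := by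
    rw [abs_div, abs_of_pos hx0]
    exact div_le_div₀ (by norm_num) hRh hx0 le_rfl
  have hnum : |Rh' n x * x - Rh n x| ≤ 2 * n ^ 2 + 1 := by
    have h1 : |Rh' n x * x| ≤ 2 * n ^ 2 := by
      rw [abs_mul, abs_of_pos hx0]
      calc |Rh' n x| * x ≤ (2 * n ^ 2 / x ^ 2) * x :=
            mul_le_mul_of_nonneg_right hRh' hx0.le
        _ = 2 * n ^ 2 / x := by field_simp
        _ ≤ 2 * n ^ 2 := div_le_self (by positivity) hx
    calc |Rh' n x * x - Rh n x| ≤ |Rh' n x * x| + |Rh n x| := abs_sub _ _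
      _ ≤ 2 * n ^ 2 + 1 := add_le_add h1 hRh
  calc |D n x| = 2 * |Rh n x / x| * (|Rh' n x * x - Rh n x| / x ^ 2) := by
        rw [D, abs_mul, abs_mul]
        have e2 : |(2:ℝ)| = 2 := by norm_num
        have e3 : |(Rh' n x * x - Rh n x) / x ^ 2| = |Rh' n x * x - Rh n x| / x ^ 2 := by
          rw [abs_div, abs_of_pos (pow_pos hx0 2)]
        rw [e2, e3]
    _ ≤ 2 * (1 / x) * ((2 * n ^ 2 + 1) / x ^ 2) := by
        apply mul_le_mul (mul_le_mul_of_nonneg_left hRhx (by norm_num))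
          (by gcongr) (by positivity) (by positivity)
    _ = (4 * n ^ 2 + 2) / x ^ 3 := by field_simp; ring

lemma summable_D (n : ℕ) : Summable (fun t : ℕ => D n ((t:ℝ) + 1)) := by
  apply Summable.of_norm_bounded (g := fun t : ℕ => (4 * (n:ℝ) ^ 2 + 2) * (1 / ((t:ℝ) + 1) ^ 3))
  · apply Summable.mul_left
    have h1 : Summable (fun t : ℕ => 1 / ((t:ℝ)) ^ 3) :=
      Real.summable_one_div_nat_pow.mpr (by norm_num)
    have h2 := (summable_nat_add_iff 1).mpr h1
    apply h2.congr
    intro t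
    push_cast
    ring
  · intro t
    rw [Real.norm_eq_abs]
    have h1 : (1:ℝ) ≤ (t:ℝ) + 1 := by
      have := Nat.cast_nonneg (α := ℝ) t; linarith
    calc |D n ((t:ℝ) + 1)| ≤ (4 * n ^ 2 + 2) / ((t:ℝ) + 1) ^ 3 := abs_D_le n h1
      _ = (4 * (n:ℝ) ^ 2 + 2) * (1 / ((t:ℝ) + 1) ^ 3) := by ring

lemma abs_SD_le (n : ℕ) {x : ℝ} (hx : 1 ≤ x) :
    |SD n x| ≤ (20 * (2 * (n:ℝ) + 1) + 4 * (2 * n + 1) * (3 + (2 * n + 1) ^ 2) * (4 * n ^ 2 + 2)) / x := by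
  have hx0 : (0:ℝ) < x := lt_of_lt_of_le one_pos hx
  have hn0 : (0:ℝ) ≤ n := Nat.cast_nonneg n
  have hR := abs_R_le n hx0
  have hD := abs_D_le n hx
  have h1 : |4 * (2*(n:ℝ)+1) * (-4*x+1)| ≤ 4*(2*(n:ℝ)+1)*(5*x) := by
    rw [abs_mul, abs_of_nonneg (by positivity : (0:ℝ) ≤ 4*(2*(n:ℝ)+1))]
    apply mul_le_mul_of_nonneg_left _ (by positivity)
    rw [abs_le]; constructor <;> nlinarith
  have h2 : |4 * (2*(n:ℝ)+1) * (-2*x^2+x+(2*(n:ℝ)+1)^2)|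
      ≤ 4*(2*(n:ℝ)+1)*((3+(2*(n:ℝ)+1)^2)*x^2) := by
    rw [abs_mul, abs_of_nonneg (by positivity : (0:ℝ) ≤ 4*(2*(n:ℝ)+1))]
    apply mul_le_mul_of_nonneg_left _ (by positivity)
    have hx2 : (1:ℝ) ≤ x ^ 2 := by nlinarith
    rw [abs_le]; constructor <;> nlinarith [sq_nonneg (2*(n:ℝ)+1)]
  calc |SD n x|
      ≤ |4 * (2*(n:ℝ)+1) * (-4*x+1) * R n x|
        + |4 * (2*(n:ℝ)+1) * (-2*x^2+x+(2*(n:ℝ)+1)^2) * D n x| := by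
        rw [SD]; exact abs_add_le _ _
    _ ≤ (4*(2*(n:ℝ)+1)*(5*x)) * (1/x^2)
        + (4*(2*(n:ℝ)+1)*((3+(2*(n:ℝ)+1)^2)*x^2)) * ((4*(n:ℝ)^2+2)/x^3) := by
        apply add_le_add
        · calc |4 * (2*(n:ℝ)+1) * (-4*x+1) * R n x|
              = |4 * (2*(n:ℝ)+1) * (-4*x+1)| * |R n x| := abs_mul _ _
            _ ≤ (4*(2*(n:ℝ)+1)*(5*x)) * (1/x^2) :=
              mul_le_mul h1 hR (abs_nonneg _) (by positivity)
        · calc |4 * (2*(n:ℝ)+1) * (-2*x^2+x+(2*(n:ℝ)+1)^2) * D n x|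
              = |4 * (2*(n:ℝ)+1) * (-2*x^2+x+(2*(n:ℝ)+1)^2)| * |D n x| := abs_mul _ _
            _ ≤ (4*(2*(n:ℝ)+1)*((3+(2*(n:ℝ)+1)^2)*x^2)) * ((4*(n:ℝ)^2+2)/x^3) :=
              mul_le_mul h2 hD (abs_nonneg _) (by positivity)
    _ = (20 * (2 * (n:ℝ) + 1) + 4 * (2*(n:ℝ)+1) * (3 + (2*(n:ℝ)+1) ^ 2) * (4*(n:ℝ)^2+2)) / x := by
        field_simp
        ring

lemma tendsto_SD (n : ℕ) :
    Tendsto (fun T : ℕ => SD n ((T:ℝ) + 1)) atTop (nhds 0) := by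
  set C : ℝ := 20 * (2 * (n:ℝ) + 1) + 4 * (2*(n:ℝ)+1) * (3 + (2*(n:ℝ)+1) ^ 2) * (4*(n:ℝ)^2+2)
  apply squeeze_zero_norm (a := fun T : ℕ => C / ((T:ℝ) + 1))
  · intro T
    rw [Real.norm_eq_abs]
    exact abs_SD_le n (by have := Nat.cast_nonneg (α := ℝ) T; linarith)
  · apply Tendsto.div_atTop (tendsto_const_nhds)
    apply tendsto_atTop_add_const_right
    exact tendsto_natCast_atTop_atTop

lemma Rh_one (m : ℕ) : Rh (m + 1) 1 = 0 := by
  rw [Rh]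
  apply Finset.prod_eq_zero (Finset.mem_Icc.mpr ⟨le_rfl, by omega⟩ : 1 ∈ Finset.Icc 1 (m+1))
  norm_num

lemma R_one (m : ℕ) : R (m + 1) 1 = 0 := by
  rw [R]
  have h : (∏ j ∈ Finset.Icc 1 (m+1), ((1:ℝ) - j)) = 0 := by
    apply Finset.prod_eq_zero (Finset.mem_Icc.mpr ⟨le_rfl, by omega⟩ : 1 ∈ Finset.Icc 1 (m+1))
    norm_num
  rw [h, zero_div]
  norm_num

lemma D_one (m : ℕ) : D (m + 1) 1 = 0 := by
  rw [D, Rh_one]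
  norm_num

lemma SD_one (m : ℕ) : SD (m + 1) 1 = 0 := by
  rw [SD, R_one, D_one]
  ring

lemma key_deriv (m : ℕ) {x : ℝ} (hx : 0 < x) :
    ((m:ℝ) + 2) ^ 3 * D (m + 2) x
      - (2 * ((m:ℝ)+1) + 1) * (17 * ((m:ℝ)+1) ^ 2 + 17 * ((m:ℝ)+1) + 5) * D (m + 1) x
      + ((m:ℝ) + 1) ^ 3 * D m x
      = SD (m + 1) (x + 1) - SD (m + 1) x := by
  have hx1 : (0:ℝ) < x + 1 := by linarith
  set c : ℝ := (2 * ((m:ℝ)+1) + 1) * (17 * ((m:ℝ)+1) ^ 2 + 17 * ((m:ℝ)+1) + 5) with hc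
  have hL : HasDerivAt
      (fun y => ((m:ℝ) + 2) ^ 3 * R (m + 2) y - c * R (m + 1) y + ((m:ℝ) + 1) ^ 3 * R m y)
      (((m:ℝ) + 2) ^ 3 * D (m + 2) x - c * D (m + 1) x + ((m:ℝ) + 1) ^ 3 * D m x) x :=
    (((hasDerivAt_R (m+2) hx).const_mul _).sub ((hasDerivAt_R (m+1) hx).const_mul _)).add
      ((hasDerivAt_R m hx).const_mul _)
  have hM : HasDerivAt (fun y => Sf (m + 1) (y + 1) - Sf (m + 1) y)
      (SD (m + 1) (x + 1) - SD (m + 1) x) x := by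
    have h1 : HasDerivAt (fun y : ℝ => Sf (m + 1) (y + 1)) (SD (m + 1) (x + 1)) x := by
      have h2 := (hasDerivAt_Sf (m+1) hx1).comp x ((hasDerivAt_id x).add_const 1)
      simpa [Function.comp_def] using h2
    exact h1.sub (hasDerivAt_Sf (m+1) hx)
  have heq : (fun y => Sf (m + 1) (y + 1) - Sf (m + 1) y) =ᶠ[nhds x]
      (fun y => ((m:ℝ) + 2) ^ 3 * R (m + 2) y - c * R (m + 1) y + ((m:ℝ) + 1) ^ 3 * R m y) := by
    filter_upwards [IsOpen.eventually_mem isOpen_Ioi (Set.mem_Ioi.mpr hx)] with y hy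
    exact (key_identity m (Set.mem_Ioi.mp hy)).symm
  have hM' := hL.congr_of_eventuallyEq heq
  exact hM'.unique hM

theorem apery_recurrence_F (n : ℕ) (hn : 0 < n) :
    ((n : ℝ) + 1) ^ 3 * F (n + 1)
      - (2 * n + 1) * (17 * n ^ 2 + 17 * n + 5) * F n
      + (n : ℝ) ^ 3 * F (n - 1) = 0 := by
  obtain ⟨m, rfl⟩ : ∃ m, n = m + 1 := ⟨n - 1, by omega⟩
  simp only [Nat.add_sub_cancel]
  set c : ℝ := (2 * ((m:ℝ)+1) + 1) * (17 * ((m:ℝ)+1) ^ 2 + 17 * ((m:ℝ)+1) + 5) with hc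
  have ha := summable_D (m + 2)
  have hb := summable_D (m + 1)
  have hcs := summable_D m
  set combo : ℕ → ℝ := fun t =>
    ((m:ℝ) + 2) ^ 3 * D (m + 2) ((t:ℝ) + 1) - c * D (m + 1) ((t:ℝ) + 1)
      + ((m:ℝ) + 1) ^ 3 * D m ((t:ℝ) + 1) with hcombo_def
  have hcombo : Summable combo :=
    ((ha.mul_left _).sub (hb.mul_left _)).add (hcs.mul_left _)
  set f : ℕ → ℝ := fun t => SD (m + 1) ((t:ℝ) + 1) with hf_def
  have htel : ∀ t : ℕ, combo t = f (t + 1) - f t := by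
    intro t
    have hpos : (0:ℝ) < (t:ℝ) + 1 := by positivity
    have h := key_deriv m hpos
    rw [hcombo_def, hf_def]
    simp only []
    rw [h]
    push_cast
    ring_nf
  have hsum0 : ∑' t, combo t = 0 := by
    have h1 := hcombo.hasSum.tendsto_sum_nat
    have h2 : (fun T : ℕ => ∑ t ∈ Finset.range T, combo t) = fun T => f T - f 0 := by
      funext T
      rw [Finset.sum_congr rfl (fun t _ => htel t), Finset.sum_range_sub f]
    rw [h2] at h1
    have h3 : Tendsto (fun T : ℕ => f T - f 0) atTop (nhds (0 - f 0)) :=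
      (tendsto_SD (m+1)).sub_const _
    have h4 := tendsto_nhds_unique h1 h3
    have h5 : f 0 = 0 := by
      rw [hf_def]
      simp only [Nat.cast_zero, zero_add]
      exact SD_one m
    rw [h4, h5]
    ring
  have hF : ∀ k : ℕ, F k = -∑' t : ℕ, D k ((t:ℝ) + 1) := by
    intro k
    rw [F]
    congr 1
    apply tsum_congr
    intro t
    exact deriv_R k (by positivity)
  have e1 : ∑' t, combo t
      = ((m:ℝ) + 2) ^ 3 * (∑' t : ℕ, D (m + 2) ((t:ℝ) + 1))
        - c * (∑' t : ℕ, D (m + 1) ((t:ℝ) + 1))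
        + ((m:ℝ) + 1) ^ 3 * (∑' t : ℕ, D m ((t:ℝ) + 1)) := by
    rw [hcombo_def]
    rw [Summable.tsum_add ((ha.mul_left _).sub (hb.mul_left _)) (hcs.mul_left _),
      Summable.tsum_sub (ha.mul_left _) (hb.mul_left _), tsum_mul_left, tsum_mul_left, tsum_mul_left]
  rw [hsum0] at e1
  have h212 : m + 1 + 1 = m + 2 := by omega
  rw [h212, hF (m + 2), hF (m + 1), hF m]
  push_cast
  linear_combination e1
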